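/- Let τ > 1, v > 0, μ > 0, ω > v²/(τ²−1)². Let (T̃₋, T̃₊) and (T̂₋, T̂₊) be the two admissible solution pairs of the matching system, given by the explicit formulas with − and + signs respectively. Then T̃₋ < T̃₊ < T̂₊ < T̂₋, ∫_{T̃₋}^{T̃₊} (1−t²)^{1/μ} dt > 0, and ∫_{T̂₋}^{T̂₊} (1−t²)^{1/μ} dt < 0; consequently S̃(u_{T̃}) < S̃(u_{T̂}), i.e., the state u_{T̃} has strictly smaller action on the Nehari manifold. -/

import Mathlib

/-!
The ordering of the four roots is elementary algebra once one squares the only nontrivial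
inequality `(τ^{2μ+2} - 1) v/√ω < (τ² - 1) √A(ω)`: the difference of the squares factors as
`(τ^{2μ+4} - 1)(τ^{2μ} - 1)((τ² - 1)² - v²/ω)`, which is positive exactly when `ω > v²/(τ² - 1)²`.

For the actions, the substitution `t = tanh (μ √ω x)` turns `|soliton|^{2μ+2} dx` into a positive
multiple of `(1 - t²)^{1/μ} dt`. The difference of the actions of two glued states is a difference
of integrals over half-lines that only differ on bounded intervals, hence a positive multiple of
`∫_{T̂₋}^{T̂₊} - ∫_{T̃₋}^{T̃₊}` of that density, and the sign of each integral is that of `T₊ - T₋`.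
-/

open Set Real MeasureTheory intervalIntegral

noncomputable section

def Aq (τ v μ ω : ℝ) : ℝ :=
  v ^ 2 / ω * τ ^ (2 * μ) + (τ ^ (2 * μ + 4) - 1) * (τ ^ (2 * μ) - 1)

def Ttm (τ v μ ω : ℝ) : ℝ :=
  1 / (τ ^ (2 * μ + 4) - 1) * (v / Real.sqrt ω - τ ^ 2 * Real.sqrt (Aq τ v μ ω))

def Ttp (τ v μ ω : ℝ) : ℝ :=
  1 / (τ ^ (2 * μ + 4) - 1) * (τ ^ (2 * μ + 2) * (v / Real.sqrt ω) - Real.sqrt (Aq τ v μ ω))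

def Thm (τ v μ ω : ℝ) : ℝ :=
  1 / (τ ^ (2 * μ + 4) - 1) * (v / Real.sqrt ω + τ ^ 2 * Real.sqrt (Aq τ v μ ω))

def Thp (τ v μ ω : ℝ) : ℝ :=
  1 / (τ ^ (2 * μ + 4) - 1) * (τ ^ (2 * μ + 2) * (v / Real.sqrt ω) + Real.sqrt (Aq τ v μ ω))

/-- The one-dimensional NLS soliton. -/
def soliton (μ ω : ℝ) (x : ℝ) : ℝ :=
  (ω * (μ + 1)) ^ (1 / (2 * μ)) * (Real.cosh (μ * Real.sqrt ω * x)) ^ (-(1 / μ))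

/-- The reduced action `S̃(u) = (μ/(2(μ+1)))‖u‖_{2μ+2}^{2μ+2}`. -/
def StilF (μ : ℝ) (f : ℝ → ℝ) : ℝ := μ / (2 * (μ + 1)) * ∫ x : ℝ, |f x| ^ (2 * μ + 2)

theorem Real.one_sub_tanh_sq (x : ℝ) : 1 - tanh x ^ 2 = cosh x ^ (-2 : ℝ) := by
  have hc := cosh_pos x
  rw [tanh_eq_sinh_div_cosh, rpow_neg hc.le, rpow_two]
  field_simp
  linarith [cosh_sq x]

theorem Real.hasDerivAt_tanh (x : ℝ) : HasDerivAt tanh (1 - tanh x ^ 2) x := by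
  rw [show tanh = sinh / cosh from funext tanh_eq_sinh_div_cosh]
  refine ((hasDerivAt_sinh x).div (hasDerivAt_cosh x) (cosh_pos x).ne').congr_deriv ?_
  rw [Pi.div_apply]
  field_simp

@[fun_prop]
theorem Real.continuous_tanh : Continuous tanh :=
  continuous_iff_continuousAt.2 fun x => (hasDerivAt_tanh x).continuousAt

theorem Real.one_sub_tanh_sq_rpow_mul_self (p y : ℝ) :
    (1 - tanh y ^ 2) ^ p * (1 - tanh y ^ 2) = cosh y ^ (-2 * (p + 1)) := by
  have hc := cosh_pos y
  rw [one_sub_tanh_sq, ← rpow_mul hc.le, ← rpow_add hc]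
  ring_nf

theorem integral_cosh_mul_rpow (p : ℝ) {b : ℝ} (hb : b ≠ 0) (a c : ℝ) :
    ∫ x in a..c, cosh (b * x) ^ (-2 * (p + 1)) =
      b⁻¹ * ∫ t in tanh (b * a)..tanh (b * c), (1 - t ^ 2) ^ p := by
  have hderiv (x : ℝ) : HasDerivAt (fun x => tanh (b * x)) ((1 - tanh (b * x) ^ 2) * b) x :=
    (hasDerivAt_tanh (b * x)).comp x ((hasDerivAt_id x).const_mul b |>.congr_deriv (mul_one b))
  have hcont : ContinuousOn (fun t : ℝ => (1 - t ^ 2) ^ p) (range tanh) := by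
    refine ContinuousOn.rpow_const (by fun_prop) ?_
    rintro _ ⟨y, rfl⟩
    exact Or.inl (by rw [one_sub_tanh_sq]; positivity)
  rw [← integral_comp_mul_deriv' (fun x _ => hderiv x) (by fun_prop)
    (hcont.mono (by rintro _ ⟨x, -, rfl⟩; exact mem_range_self _)),
    ← intervalIntegral.integral_const_mul]
  refine integral_congr fun x _ => ?_
  simp only [Function.comp_apply]
  rw [← one_sub_tanh_sq_rpow_mul_self]
  field_simp

theorem integrable_cosh_rpow_neg {q : ℝ} (hq : 0 < q) : Integrable fun x => cosh x ^ (-q) := by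
  have hcont : Continuous fun x => cosh x ^ (-q) :=
    continuous_cosh.rpow_const fun x => Or.inl (cosh_pos x).ne'
  refine hcont.locallyIntegrable.integrable_of_isBigO_atTop_of_norm_isNegInvariant
    (Filter.Eventually.of_forall fun x => by simp) (g := fun x => exp (-q * x)) ?_
    ⟨Ioi 0, Filter.Ioi_mem_atTop 0, exp_neg_integrableOn_Ioi 0 hq⟩
  refine Asymptotics.IsBigO.of_bound (2 ^ q) (Filter.Eventually.of_forall fun x => ?_)
  have hexp : exp x / 2 ≤ cosh x := by rw [cosh_eq]; linarith [exp_pos (-x)]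
  rw [norm_of_nonneg (by positivity), norm_of_nonneg (by positivity)]
  calc cosh x ^ (-q) ≤ (exp x / 2) ^ (-q) :=
        rpow_le_rpow_of_nonpos (by positivity) hexp (by linarith)
    _ = 2 ^ q * exp (-q * x) := by
      rw [div_rpow (exp_pos x).le zero_le_two, ← exp_mul, rpow_neg zero_le_two, div_inv_eq_mul,
        mul_comm, mul_comm x]

theorem setIntegral_Iio_comp_add_right (G : ℝ → ℝ) (c : ℝ) :
    ∫ x in Iio 0, G (x + c) = ∫ x in Iio c, G x := by
  have h := (measurePreserving_add_right volume c).setIntegral_preimage_emb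
    (measurableEmbedding_addRight c) G (Iio c)
  rwa [preimage_add_const_Iio, sub_self] at h

theorem setIntegral_Ici_comp_add_right (G : ℝ → ℝ) (c : ℝ) :
    ∫ x in Ici 0, G (x + c) = ∫ x in Ici c, G x := by
  have h := (measurePreserving_add_right volume c).setIntegral_preimage_emb
    (measurableEmbedding_addRight c) G (Ici c)
  rwa [preimage_add_const_Ici, sub_self] at h

theorem integral_ite_lt_zero_comp_add {G : ℝ → ℝ} (hG : Integrable G) (c₁ c₂ : ℝ) :
    ∫ x, (if x < 0 then G (x + c₁) else G (x + c₂)) =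
      (∫ x in Iio c₁, G x) + ∫ x in Ici c₂, G x := by
  rw [← setIntegral_Iio_comp_add_right, ← setIntegral_Ici_comp_add_right, ← compl_Iio]
  exact integral_piecewise (s := Iio 0) measurableSet_Iio (hG.comp_add_right c₁).integrableOn
    (hG.comp_add_right c₂).integrableOn

theorem integral_ite_lt_zero_comp_add_sub {G : ℝ → ℝ} (hG : Integrable G) (c₁ c₂ d₁ d₂ : ℝ) :
    (∫ x, if x < 0 then G (x + c₁) else G (x + c₂)) -
        (∫ x, if x < 0 then G (x + d₁) else G (x + d₂)) =
      (∫ x in c₂..d₂, G x) - ∫ x in c₁..d₁, G x := by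
  rw [integral_ite_lt_zero_comp_add hG, integral_ite_lt_zero_comp_add hG,
    ← integral_Iio_sub_Iio' (a := c₁) hG.integrableOn hG.integrableOn,
    ← integral_Ici_sub_Ici' (a := c₂) hG.integrableOn hG.integrableOn]
  ring

theorem continuous_one_sub_sq_rpow {p : ℝ} (hp : 0 ≤ p) :
    Continuous fun t : ℝ => (1 - t ^ 2) ^ p :=
  (continuous_const.sub (continuous_pow 2)).rpow_const fun _ => Or.inr hp

theorem integral_one_sub_sq_rpow_pos {p a b : ℝ} (hp : 0 ≤ p) (ha : -1 ≤ a) (hb : b ≤ 1)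
    (hab : a < b) : 0 < ∫ t in a..b, (1 - t ^ 2) ^ p := by
  refine intervalIntegral_pos_of_pos_on ((continuous_one_sub_sq_rpow hp).intervalIntegrable _ _)
    (fun t ht => rpow_pos_of_pos ?_ p) hab
  nlinarith [ht.1, ht.2]

theorem abs_soliton_rpow {μ ω : ℝ} (hμ : 0 < μ) (hω : 0 ≤ ω) (x : ℝ) :
    |soliton μ ω x| ^ (2 * μ + 2) =
      (ω * (μ + 1)) ^ ((μ + 1) / μ) * cosh (μ * √ω * x) ^ (-2 * (1 / μ + 1)) := by
  have hK : 0 ≤ ω * (μ + 1) := by positivity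
  have hc := cosh_pos (μ * √ω * x)
  unfold soliton
  rw [abs_of_nonneg (by positivity), mul_rpow (by positivity) (by positivity), ← rpow_mul hK,
    ← rpow_mul hc.le]
  congr 2
  · field_simp
  · field_simp; ring

theorem StilF_sub_StilF_of_glued {μ ω c₁ c₂ d₁ d₂ : ℝ} (hμ : 0 < μ) (hω : 0 < ω) {u w : ℝ → ℝ}
    (hu : ∀ x, u x = if x < 0 then soliton μ ω (x + c₁) else soliton μ ω (x + c₂))
    (hw : ∀ x, w x = if x < 0 then soliton μ ω (x + d₁) else soliton μ ω (x + d₂)) :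
    StilF μ u - StilF μ w =
      μ / (2 * (μ + 1)) * (ω * (μ + 1)) ^ ((μ + 1) / μ) * (μ * √ω)⁻¹ *
        ((∫ t in tanh (μ * √ω * d₁)..tanh (μ * √ω * d₂), (1 - t ^ 2) ^ (1 / μ)) -
          ∫ t in tanh (μ * √ω * c₁)..tanh (μ * √ω * c₂), (1 - t ^ 2) ^ (1 / μ)) := by
  set b := μ * √ω
  have hb : b ≠ 0 := by positivity
  set G : ℝ → ℝ := fun x => (ω * (μ + 1)) ^ ((μ + 1) / μ) * cosh (b * x) ^ (-2 * (1 / μ + 1))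
  have hG : Integrable G := by
    have h := (integrable_cosh_rpow_neg (q := 2 * (1 / μ + 1)) (by positivity)).comp_mul_left' hb
    simpa only [G, neg_mul] using h.const_mul ((ω * (μ + 1)) ^ ((μ + 1) / μ))
  have habs {v : ℝ → ℝ} {e₁ e₂ : ℝ}
      (hv : ∀ x, v x = if x < 0 then soliton μ ω (x + e₁) else soliton μ ω (x + e₂)) :
      (fun x => |v x| ^ (2 * μ + 2)) = fun x => if x < 0 then G (x + e₁) else G (x + e₂) := by
    funext x
    rw [hv]
    split_ifs <;> exact abs_soliton_rpow hμ hω.le _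
  have hg := continuous_one_sub_sq_rpow (p := 1 / μ) (by positivity)
  unfold StilF
  rw [← mul_sub, habs hu, habs hw, integral_ite_lt_zero_comp_add_sub hG,
    intervalIntegral.integral_const_mul, intervalIntegral.integral_const_mul,
    integral_cosh_mul_rpow _ hb, integral_cosh_mul_rpow _ hb, ← mul_sub, ← mul_sub,
    integral_interval_sub_interval_comm' (hg.intervalIntegrable _ _)
      (hg.intervalIntegrable _ _) (hg.intervalIntegrable _ _)]
  ring

theorem sub_one_mul_lt_sub_one_mul_sqrt {a t c : ℝ} (ha : 1 < a) (ht : 1 < t) (hc : 0 ≤ c)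
    (hct : c < t - 1) :
    (a * t - 1) * c < (t - 1) * √(c ^ 2 * a + (a * t ^ 2 - 1) * (a - 1)) := by
  have hat : 1 < a * t ^ 2 := by nlinarith [one_lt_pow₀ ht two_ne_zero]
  have hprod : 0 < (a * t ^ 2 - 1) * (a - 1) := mul_pos (sub_pos.2 hat) (sub_pos.2 ha)
  have hX : 0 ≤ c ^ 2 * a + (a * t ^ 2 - 1) * (a - 1) := by positivity
  refine lt_of_pow_lt_pow_left₀ 2 (mul_nonneg (by linarith) (sqrt_nonneg _)) ?_
  have hdiff : ((t - 1) * √(c ^ 2 * a + (a * t ^ 2 - 1) * (a - 1))) ^ 2 - ((a * t - 1) * c) ^ 2 =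
      (a * t ^ 2 - 1) * (a - 1) * ((t - 1) ^ 2 - c ^ 2) := by
    rw [mul_pow, sq_sqrt hX]; ring
  have hc2 : 0 < (t - 1) ^ 2 - c ^ 2 := by nlinarith
  nlinarith [mul_pos hprod hc2]

theorem Ttm_lt_Ttp_lt_Thp_lt_Thm {τ v μ ω : ℝ} (hτ : 1 < τ) (hv : 0 ≤ v) (hμ : 0 < μ)
    (hω₀ : 0 < ω) (hω : v ^ 2 / (τ ^ 2 - 1) ^ 2 < ω) :
    Ttm τ v μ ω < Ttp τ v μ ω ∧ Ttp τ v μ ω < Thp τ v μ ω ∧ Thp τ v μ ω < Thm τ v μ ω := by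
  have hτ0 : 0 < τ := one_pos.trans hτ
  have hpow (k : ℕ) : τ ^ (2 * μ + k) = τ ^ (2 * μ) * τ ^ k := by rw [rpow_add hτ0, rpow_natCast]
  have hpow2 : τ ^ (2 * μ + 2) = τ ^ (2 * μ) * τ ^ 2 := by exact_mod_cast hpow 2
  have hpow4 : τ ^ (2 * μ + 4) = τ ^ (2 * μ) * (τ ^ 2) ^ 2 := by
    rw [← pow_mul]; exact_mod_cast hpow 4
  have hct : v / √ω < τ ^ 2 - 1 := by
    have ht : 1 < τ ^ 2 := one_lt_pow₀ hτ two_ne_zero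
    rw [div_lt_iff₀ (sqrt_pos.2 hω₀), ← sqrt_sq (by linarith : 0 ≤ τ ^ 2 - 1),
      ← sqrt_mul' _ hω₀.le, lt_sqrt hv, ← div_lt_iff₀' (by nlinarith)]
    exact hω
  have hA : Aq τ v μ ω =
      (v / √ω) ^ 2 * τ ^ (2 * μ) + (τ ^ (2 * μ) * (τ ^ 2) ^ 2 - 1) * (τ ^ (2 * μ) - 1) := by
    rw [Aq, div_pow, sq_sqrt hω₀.le, hpow4]
  unfold Ttm Ttp Thp Thm
  rw [hpow2, hpow4, hA]
  set a := τ ^ (2 * μ)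
  set t := τ ^ 2
  set c := v / √ω
  have ha : 1 < a := one_lt_rpow hτ (by positivity)
  have ht : 1 < t := one_lt_pow₀ hτ two_ne_zero
  have hat : 1 < a * t ^ 2 := by nlinarith [one_lt_pow₀ ht two_ne_zero]
  have hc : 0 ≤ c := by positivity
  have hkey := sub_one_mul_lt_sub_one_mul_sqrt ha ht hc hct
  set s := √(c ^ 2 * a + (a * t ^ 2 - 1) * (a - 1))
  have hs : 0 < s := by
    have : 0 ≤ c ^ 2 * a := by positivity
    exact sqrt_pos.2 (by nlinarith [mul_pos (sub_pos.2 hat) (sub_pos.2 ha)])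
  have hD : 0 < 1 / (a * t ^ 2 - 1) := one_div_pos.2 (sub_pos.2 hat)
  refine ⟨mul_lt_mul_of_pos_left ?_ hD, mul_lt_mul_of_pos_left ?_ hD, mul_lt_mul_of_pos_left ?_ hD⟩
  · nlinarith [mul_pos (sub_pos.2 ht) hs, mul_nonneg (by nlinarith : 0 ≤ a * t - 1) hc]
  · linarith
  · linarith

/-- ordering of the two admissible solution pairs for `τ > 1`,
signs of the corresponding integrals, and the resulting strict comparison of the
reduced actions of the two stationary states. -/
theorem ground_state_identification
    (τ v μ ω : ℝ) (hτ : 1 < τ) (hv : 0 < v) (hμ : 0 < μ)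
    (hω : ω > v ^ 2 / (τ ^ 2 - 1) ^ 2)
    (xtm xtp xhm xhp : ℝ)
    (hxtm : Real.tanh (μ * Real.sqrt ω * xtm) = Ttm τ v μ ω)
    (hxtp : Real.tanh (μ * Real.sqrt ω * xtp) = Ttp τ v μ ω)
    (hxhm : Real.tanh (μ * Real.sqrt ω * xhm) = Thm τ v μ ω)
    (hxhp : Real.tanh (μ * Real.sqrt ω * xhp) = Thp τ v μ ω)
    (uTil uHat : ℝ → ℝ)
    (huTil : ∀ x : ℝ, uTil x = if x < 0 then soliton μ ω (x + xtm) else soliton μ ω (x + xtp))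
    (huHat : ∀ x : ℝ, uHat x = if x < 0 then soliton μ ω (x + xhm) else soliton μ ω (x + xhp)) :
    (Ttm τ v μ ω < Ttp τ v μ ω ∧ Ttp τ v μ ω < Thp τ v μ ω ∧ Thp τ v μ ω < Thm τ v μ ω) ∧
    (0 < ∫ t in (Ttm τ v μ ω)..(Ttp τ v μ ω), (1 - t ^ 2) ^ (1 / μ)) ∧
    ((∫ t in (Thm τ v μ ω)..(Thp τ v μ ω), (1 - t ^ 2) ^ (1 / μ)) < 0) ∧
    StilF μ uTil < StilF μ uHat := by
  have hω₀ : 0 < ω := lt_of_le_of_lt (by positivity) hω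
  obtain ⟨h₁, h₂, h₃⟩ := Ttm_lt_Ttp_lt_Thp_lt_Thm hτ hv.le hμ hω₀ hω
  have hp : 0 ≤ 1 / μ := by positivity
  have hTil : 0 < ∫ t in (Ttm τ v μ ω)..(Ttp τ v μ ω), (1 - t ^ 2) ^ (1 / μ) :=
    integral_one_sub_sq_rpow_pos hp (hxtm ▸ (neg_one_lt_tanh _).le) (hxtp ▸ (tanh_lt_one _).le) h₁
  have hHat : (∫ t in (Thm τ v μ ω)..(Thp τ v μ ω), (1 - t ^ 2) ^ (1 / μ)) < 0 := by
    rw [integral_symm, neg_lt_zero]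
    exact integral_one_sub_sq_rpow_pos hp (hxhp ▸ (neg_one_lt_tanh _).le)
      (hxhm ▸ (tanh_lt_one _).le) h₃
  refine ⟨⟨h₁, h₂, h₃⟩, hTil, hHat, sub_neg.1 ?_⟩
  rw [StilF_sub_StilF_of_glued hμ hω₀ huTil huHat, hxtm, hxtp, hxhm, hxhp]
  exact mul_neg_of_pos_of_neg (by positivity) (by linarith)
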